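/- arXiv:2504.01772 — 2 statements merged into one kernel-verified Lean document; each statement's English description precedes it below -/
import Mathlib

section
/- For any real p > 1, the function φ_p(x) = ‖x‖^p / p on a normed space X is strictly convex if and only if the space X is strictly convex (i.e., for all x ≠ y with ‖x‖ = ‖y‖ = 1, ‖x+y‖/2 < 1). -/
/-- For `p > 1`, the function `φ_p(x) = ‖x‖^p / p` on a normed space `X` is strictly convex
if and only if the space `X` is strictly convex. -/
theorem phi_p_strictConvex_iff_space_strictConvex {X : Type*} [NormedAddCommGroup X]
    [NormedSpace ℝ X] [Nontrivial X] (p : ℝ) (hp : 1 < p) :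
    (∀ x y : X, x ≠ y → ∀ a b : ℝ, 0 < a → 0 < b → a + b = 1 →
      ‖a • x + b • y‖ ^ p / p < a * (‖x‖ ^ p / p) + b * (‖y‖ ^ p / p))
    ↔
    (∀ x y : X, x ≠ y → ‖x‖ = 1 → ‖y‖ = 1 → ‖x + y‖ / 2 < 1) := by
  have hp0 : (0:ℝ) < p := lt_trans one_pos hp
  constructor
  · intro h x y hxy hx hy
    have key := h x y hxy (1/2) (1/2) (by norm_num) (by norm_num) (by norm_num)
    rw [hx, hy] at key
    have hmid : ‖(1/2 : ℝ) • x + (1/2 : ℝ) • y‖ = ‖x + y‖ / 2 := by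
      rw [← smul_add, norm_smul]
      simp [abs_of_nonneg]
      ring
    rw [hmid] at key
    have h1 : (1:ℝ) ^ p = 1 := Real.one_rpow p
    rw [h1] at key
    have key2 : (‖x + y‖ / 2) ^ p < 1 := by
      have : (‖x + y‖ / 2) ^ p / p < 1 / p := by linarith
      exact (div_lt_div_iff_of_pos_right hp0).mp this
    by_contra hle
    push_neg at hle
    have : (1:ℝ) ≤ (‖x + y‖ / 2) ^ p := Real.one_le_rpow hle (le_of_lt hp0)
    linarith
  · intro h x y hxy a b ha hb hab
    haveI : StrictConvexSpace ℝ X := by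
      apply StrictConvexSpace.of_norm_combo_lt_one
      intro u v hu hv huv
      refine ⟨1/2, 1/2, by norm_num, ?_⟩
      have hmid : ‖(1/2 : ℝ) • u + (1/2 : ℝ) • v‖ = ‖u + v‖ / 2 := by
        rw [← smul_add, norm_smul]
        simp [abs_of_nonneg]
        ring
      rw [hmid]
      exact h u v huv hu hv
    have hdiv : ∀ s t : ℝ, s < t → s / p < t / p := fun s t hst =>
      (div_lt_div_iff_of_pos_right hp0).mpr hst
    have main : ‖a • x + b • y‖ ^ p < a * ‖x‖ ^ p + b * ‖y‖ ^ p := by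
      by_cases hnorm : ‖x‖ = ‖y‖
      · -- same norms: use strict convexity of the space
        have hr : 0 < ‖x‖ := by
          rcases eq_or_lt_of_le (norm_nonneg x) with h0 | h0
          · exfalso
            apply hxy
            have hx0 : x = 0 := norm_eq_zero.mp h0.symm
            have hy0 : y = 0 := norm_eq_zero.mp (by rw [← hnorm]; exact h0.symm)
            rw [hx0, hy0]
          · exact h0
        have hlt : ‖a • x + b • y‖ < ‖x‖ :=
          norm_combo_lt_of_ne le_rfl (le_of_eq hnorm.symm) hxy ha hb hab
        have hpow : ‖a • x + b • y‖ ^ p < ‖x‖ ^ p :=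
          Real.rpow_lt_rpow (norm_nonneg _) hlt hp0
        calc ‖a • x + b • y‖ ^ p < ‖x‖ ^ p := hpow
          _ = a * ‖x‖ ^ p + b * ‖y‖ ^ p := by rw [← hnorm, ← add_mul, hab, one_mul]
      · -- different norms: use strict convexity of t ^ p
        have hsc := (strictConvexOn_rpow hp).2 (Set.mem_Ici.mpr (norm_nonneg x))
          (Set.mem_Ici.mpr (norm_nonneg y)) hnorm ha hb hab
        simp only [smul_eq_mul] at hsc
        have htri : ‖a • x + b • y‖ ≤ a * ‖x‖ + b * ‖y‖ := by
          calc ‖a • x + b • y‖ ≤ ‖a • x‖ + ‖b • y‖ := norm_add_le _ _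
            _ = a * ‖x‖ + b * ‖y‖ := by
              rw [norm_smul, norm_smul, Real.norm_eq_abs, Real.norm_eq_abs,
                abs_of_pos ha, abs_of_pos hb]
        have hmono : ‖a • x + b • y‖ ^ p ≤ (a * ‖x‖ + b * ‖y‖) ^ p :=
          Real.rpow_le_rpow (norm_nonneg _) htri (le_of_lt hp0)
        exact lt_of_le_of_lt hmono hsc
    have := hdiv _ _ main
    calc ‖a • x + b • y‖ ^ p / p < (a * ‖x‖ ^ p + b * ‖y‖ ^ p) / p := this
      _ = a * (‖x‖ ^ p / p) + b * (‖y‖ ^ p / p) := by ring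
end

section
/- In a real Hilbert space with p = 2, the Moreau–Yosida regularization f_ε of a proper convex lower semicontinuous function f is Fréchet differentiable with ∇f_ε(x) = (x - prox_{εf}(x))/ε, and ∇f_ε is Lipschitz continuous with constant 1/ε. -/
/-!
Testing the minimality of `p = prox x` against the points of the segment from `p` to any `q`
with `f q` finite gives the variational inequality `⟪x - p, q - p⟫ ≤ ε (f q - f p)`. Adding it
at `x` and at `y` shows that `prox` is firmly nonexpansive, so `x ↦ x - prox x` is
`1`-Lipschitz. Using `prox x` as a competitor in the infimum defining `f_ε y` gives
`f_ε y - f_ε x ≤ ⟪∇f_ε x, y - x⟫ + ‖y - x‖² / (2ε)`; exchanging `x` and `y` and using the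
Lipschitz bound gives the matching lower bound, so the remainder is `O(‖y - x‖²)`.
-/

open Filter Topology Set Asymptotics
open scoped InnerProductSpace

theorem EReal.eq_coe_sub_of_coe_eq_add {a c : ℝ} {b : EReal} (h : (a : EReal) = b + c) :
    b = ((a - c : ℝ) : EReal) := by
  induction b using EReal.rec with
  | bot => simp at h
  | top => simp at h
  | coe b => norm_cast at h ⊢; linarith

theorem le_of_forall_mem_Ioo_le_add_mul {a b C : ℝ} (h : ∀ t ∈ Ioo (0 : ℝ) 1, a ≤ b + t * C) :
    a ≤ b := by
  have hlim : Tendsto (fun t : ℝ => b + t * C) (𝓝[>] 0) (𝓝 b) := by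
    have hcont : Continuous fun t : ℝ => b + t * C := by fun_prop
    exact (hcont.tendsto' 0 b (by simp)).mono_left nhdsWithin_le_nhds
  exact ge_of_tendsto hlim (mem_of_superset (Ioo_mem_nhdsGT one_pos) h)

section InnerProductSpace

variable {H : Type*} [NormedAddCommGroup H] [InnerProductSpace ℝ H]

theorem norm_sub_le_of_norm_sq_le_inner {u v : H} (h : ‖v‖ ^ 2 ≤ ⟪u, v⟫_ℝ) :
    ‖u - v‖ ≤ ‖u‖ := by
  have hsq : ‖u - v‖ ^ 2 ≤ ‖u‖ ^ 2 := by
    rw [norm_sub_sq_real]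
    linarith [sq_nonneg ‖v‖]
  exact (pow_le_pow_iff_left₀ (norm_nonneg _) (norm_nonneg _) two_ne_zero).1 hsq

theorem hasGradientAt_of_sub_le_inner_add [CompleteSpace H] {φ : H → ℝ} {g : H → H} {K L : ℝ}
    (hup : ∀ x y, φ y - φ x ≤ ⟪g x, y - x⟫_ℝ + L * ‖y - x‖ ^ 2)
    (hlip : ∀ x y, ‖g x - g y‖ ≤ K * ‖x - y‖) (x : H) :
    HasGradientAt φ (g x) x := by
  rw [hasGradientAt_iff_isLittleO]
  refine IsBigO.trans_isLittleO ?_ (isLittleO_pow_sub_sub x one_lt_two)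
  refine IsBigO.of_bound (|K| + |L|) (Eventually.of_forall fun y => ?_)
  have hcross : -(K * ‖y - x‖ ^ 2) ≤ ⟪g y - g x, y - x⟫_ℝ := by
    refine neg_le_of_abs_le ((abs_real_inner_le_norm _ _).trans ?_)
    calc ‖g y - g x‖ * ‖y - x‖ ≤ K * ‖y - x‖ * ‖y - x‖ := by gcongr; exact hlip y x
      _ = K * ‖y - x‖ ^ 2 := by ring
  have hdown := hup y x
  rw [norm_sub_rev, show x - y = -(y - x) by abel, inner_neg_right] at hdown
  rw [inner_sub_left] at hcross
  rw [Real.norm_eq_abs, norm_pow, norm_norm, abs_le]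
  have hnn : 0 ≤ ‖y - x‖ ^ 2 := sq_nonneg _
  constructor <;> nlinarith [hup x y, le_abs_self K, le_abs_self L, neg_abs_le K, neg_abs_le L]

theorem inner_le_of_forall_le_add_sq {f : H → EReal} {ε : ℝ} (hε : 0 < ε)
    (hconv : ∀ x y : H, ∀ a b : ℝ, 0 < a → 0 < b → a + b = 1 →
      f (a • x + b • y) ≤ (a : EReal) * f x + (b : EReal) * f y)
    {x p q : H} {rp rq : ℝ} (hp : f p = rp) (hq : f q = rq)
    (hmin : ∀ y, ((rp + ‖x - p‖ ^ 2 / (2 * ε) : ℝ) : EReal) ≤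
      f y + ((‖x - y‖ ^ 2 / (2 * ε) : ℝ) : EReal)) :
    ⟪x - p, q - p⟫_ℝ ≤ ε * (rq - rp) := by
  refine le_of_forall_mem_Ioo_le_add_mul (C := ‖q - p‖ ^ 2 / 2) fun t ⟨ht0, ht1⟩ => ?_
  have hseg : f ((1 - t) • p + t • q) ≤ (((1 - t) * rp + t * rq : ℝ) : EReal) := by
    have := hconv p q (1 - t) t (by linarith) ht0 (by ring)
    rw [hp, hq] at this
    exact_mod_cast this
  have hval : rp + ‖x - p‖ ^ 2 / (2 * ε) ≤
      (1 - t) * rp + t * rq + ‖x - ((1 - t) • p + t • q)‖ ^ 2 / (2 * ε) := by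
    have := (hmin _).trans (add_le_add_left hseg _)
    exact_mod_cast this
  have hexp : ‖x - ((1 - t) • p + t • q)‖ ^ 2 =
      ‖x - p‖ ^ 2 - 2 * t * ⟪x - p, q - p⟫_ℝ + t ^ 2 * ‖q - p‖ ^ 2 := by
    rw [show x - ((1 - t) • p + t • q) = (x - p) - t • (q - p) by module, norm_sub_sq_real,
      real_inner_smul_right, norm_smul, Real.norm_of_nonneg ht0.le]
    ring
  rw [hexp] at hval
  field_simp at hval
  nlinarith

section MoreauEnvelope

variable {f : H → EReal} {ε : ℝ} {feps : H → ℝ} {prox : H → H}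

theorem norm_prox_sub_sq_le_inner (hε : 0 < ε)
    (hconv : ∀ x y : H, ∀ a b : ℝ, 0 < a → 0 < b → a + b = 1 →
      f (a • x + b • y) ≤ (a : EReal) * f x + (b : EReal) * f y)
    (hlb : ∀ x y : H, ((feps x : ℝ) : EReal) ≤ f y + ((‖x - y‖ ^ 2 / (2 * ε) : ℝ) : EReal))
    (hprox : ∀ x : H,
      ((feps x : ℝ) : EReal) = f (prox x) + ((‖x - prox x‖ ^ 2 / (2 * ε) : ℝ) : EReal))
    (x y : H) :
    ‖prox x - prox y‖ ^ 2 ≤ ⟪x - y, prox x - prox y⟫_ℝ := by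
  have hvar : ∀ x y : H, ⟪x - prox x, prox y - prox x⟫_ℝ ≤
      ε * ((feps y - ‖y - prox y‖ ^ 2 / (2 * ε)) - (feps x - ‖x - prox x‖ ^ 2 / (2 * ε))) :=
    fun x y => inner_le_of_forall_le_add_sq hε hconv
      (EReal.eq_coe_sub_of_coe_eq_add (hprox x)) (EReal.eq_coe_sub_of_coe_eq_add (hprox y))
      (by simpa using hlb x)
  have hsum : ⟪x - prox x, prox y - prox x⟫_ℝ + ⟪y - prox y, prox x - prox y⟫_ℝ =
      ‖prox x - prox y‖ ^ 2 - ⟪x - y, prox x - prox y⟫_ℝ := by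
    rw [← neg_sub (prox x) (prox y), inner_neg_right, ← real_inner_self_eq_norm_sq]
    simp only [inner_sub_left]
    ring
  linarith [hvar x y, hvar y x]

theorem norm_sub_prox_sub_le (hε : 0 < ε)
    (hconv : ∀ x y : H, ∀ a b : ℝ, 0 < a → 0 < b → a + b = 1 →
      f (a • x + b • y) ≤ (a : EReal) * f x + (b : EReal) * f y)
    (hlb : ∀ x y : H, ((feps x : ℝ) : EReal) ≤ f y + ((‖x - y‖ ^ 2 / (2 * ε) : ℝ) : EReal))
    (hprox : ∀ x : H,
      ((feps x : ℝ) : EReal) = f (prox x) + ((‖x - prox x‖ ^ 2 / (2 * ε) : ℝ) : EReal))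
    (x y : H) :
    ‖(x - prox x) - (y - prox y)‖ ≤ ‖x - y‖ := by
  rw [sub_sub_sub_comm]
  exact norm_sub_le_of_norm_sq_le_inner (norm_prox_sub_sq_le_inner hε hconv hlb hprox x y)

theorem envelope_sub_le_inner_add
    (hlb : ∀ x y : H, ((feps x : ℝ) : EReal) ≤ f y + ((‖x - y‖ ^ 2 / (2 * ε) : ℝ) : EReal))
    (hprox : ∀ x : H,
      ((feps x : ℝ) : EReal) = f (prox x) + ((‖x - prox x‖ ^ 2 / (2 * ε) : ℝ) : EReal))
    (x y : H) :
    feps y - feps x ≤ ⟪ε⁻¹ • (x - prox x), y - x⟫_ℝ + (2 * ε)⁻¹ * ‖y - x‖ ^ 2 := by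
  have hcompete := hlb y (prox x)
  rw [EReal.eq_coe_sub_of_coe_eq_add (hprox x)] at hcompete
  have hval : feps y ≤ feps x - ‖x - prox x‖ ^ 2 / (2 * ε) + ‖y - prox x‖ ^ 2 / (2 * ε) := by
    exact_mod_cast hcompete
  rw [show y - prox x = (x - prox x) + (y - x) by abel, norm_add_sq_real] at hval
  rw [real_inner_smul_left]
  linarith [show (‖x - prox x‖ ^ 2 + 2 * ⟪x - prox x, y - x⟫_ℝ + ‖y - x‖ ^ 2) / (2 * ε) =
    ‖x - prox x‖ ^ 2 / (2 * ε) + ε⁻¹ * ⟪x - prox x, y - x⟫_ℝ + (2 * ε)⁻¹ * ‖y - x‖ ^ 2 by ring]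

end MoreauEnvelope

end InnerProductSpace

theorem MY_gradient_hilbert_general {H : Type*} [NormedAddCommGroup H] [InnerProductSpace ℝ H]
    [CompleteSpace H]
    (f : H → EReal)
    (hconv : ∀ x y : H, ∀ a b : ℝ, 0 < a → 0 < b → a + b = 1 →
      f (a • x + b • y) ≤ (a : EReal) * f x + (b : EReal) * f y)
    (ε : ℝ) (hε : 0 < ε)
    (feps : H → ℝ) (prox : H → H)
    (hlb : ∀ x y : H, ((feps x : ℝ) : EReal) ≤ f y + ((‖x - y‖ ^ 2 / (2 * ε) : ℝ) : EReal))
    (hprox : ∀ x : H,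
      ((feps x : ℝ) : EReal) = f (prox x) + ((‖x - prox x‖ ^ 2 / (2 * ε) : ℝ) : EReal)) :
    (∀ x : H, HasGradientAt feps (ε⁻¹ • (x - prox x)) x) ∧
    (∀ x y : H, ‖ε⁻¹ • (x - prox x) - ε⁻¹ • (y - prox y)‖ ≤ ε⁻¹ * ‖x - y‖) := by
  have hlip : ∀ x y : H, ‖ε⁻¹ • (x - prox x) - ε⁻¹ • (y - prox y)‖ ≤ ε⁻¹ * ‖x - y‖ := by
    intro x y
    rw [← smul_sub, norm_smul, Real.norm_of_nonneg (inv_nonneg.2 hε.le)]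
    exact mul_le_mul_of_nonneg_left (norm_sub_prox_sub_le hε hconv hlb hprox x y)
      (inv_nonneg.2 hε.le)
  exact ⟨hasGradientAt_of_sub_le_inner_add (envelope_sub_le_inner_add hlb hprox) hlip, hlip⟩

/-- In a real Hilbert space with `p = 2`, the Moreau–Yosida regularization `f_ε` of a proper
convex lsc function `f` is (Fréchet) differentiable with gradient
`∇f_ε(x) = (x - prox_{εf}(x))/ε`, and the gradient is Lipschitz with constant `1/ε`. -/
theorem MY_gradient_hilbert {H : Type*} [NormedAddCommGroup H] [InnerProductSpace ℝ H]
    [CompleteSpace H]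
    (f : H → EReal) (hproper : ∃ z, f z ≠ ⊤) (hnobot : ∀ z, f z ≠ ⊥)
    (hconv : ∀ x y : H, ∀ a b : ℝ, 0 < a → 0 < b → a + b = 1 →
      f (a • x + b • y) ≤ (a : EReal) * f x + (b : EReal) * f y)
    (hlsc : LowerSemicontinuous f)
    (ε : ℝ) (hε : 0 < ε)
    (feps : H → ℝ) (prox : H → H)
    (hlb : ∀ x y : H, ((feps x : ℝ) : EReal) ≤ f y + ((‖x - y‖ ^ 2 / (2 * ε) : ℝ) : EReal))
    (hprox : ∀ x : H,
      ((feps x : ℝ) : EReal) = f (prox x) + ((‖x - prox x‖ ^ 2 / (2 * ε) : ℝ) : EReal))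
    (huniq : ∀ x y : H,
      ((feps x : ℝ) : EReal) = f y + ((‖x - y‖ ^ 2 / (2 * ε) : ℝ) : EReal) → y = prox x) :
    (∀ x : H, HasGradientAt feps (ε⁻¹ • (x - prox x)) x) ∧
    (∀ x y : H, ‖ε⁻¹ • (x - prox x) - ε⁻¹ • (y - prox y)‖ ≤ ε⁻¹ * ‖x - y‖) :=
  MY_gradient_hilbert_general f hconv ε hε feps prox hlb hprox
end
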